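/- arXiv:2407.06034 — 4 statements merged into one kernel-verified Lean document; each statement's English description precedes it below -/
import Mathlib

section
/- Let η₁ and η₂ be two compactly supported finite Borel measures on ℝ. If for every t ∈ ℝ one has ∫ |x − t| dη₁(x) = ∫ |x − t| dη₂(x), then η₁ = η₂. -/
/-!
For a finite measure `η` with finite first moment, dominated convergence (the difference quotients
of `t ↦ |x - t|` are bounded by `1`) shows that `t ↦ ∫ |x - t| dη` has right derivative
`2 η (-∞, t] - η ℝ` at every `t`. As `t → ∞` this derivative tends to the total mass `η ℝ`, so the
function `t ↦ ∫ |x - t| dη` determines the total mass and then the distribution function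
`t ↦ η (-∞, t]`, hence `η`.
-/

open MeasureTheory Filter Set Topology

theorem Continuous.integrable_of_measure_compl_eq_zero {X : Type*} [TopologicalSpace X]
    [T2Space X] [MeasurableSpace X] [OpensMeasurableSpace X] {μ : Measure X}
    [IsFiniteMeasureOnCompacts μ] {K : Set X} (hK : IsCompact K) (hμK : μ Kᶜ = 0)
    {f : X → ℝ} (hf : Continuous f) : Integrable f μ := by
  have hrestrict : μ.restrict K = μ := Measure.restrict_eq_self_of_ae_mem (ae_iff.2 hμK)
  simpa only [IntegrableOn, hrestrict] using hf.continuousOn.integrableOn_compact (μ := μ) hK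

theorem MeasureTheory.tendsto_measureReal_Iic_atTop {α : Type*} [MeasurableSpace α] [Preorder α]
    [(atTop : Filter α).IsCountablyGenerated] (μ : Measure α) [IsFiniteMeasure μ] :
    Tendsto (fun x => μ.real (Iic x)) atTop (𝓝 (μ.real univ)) :=
  (ENNReal.tendsto_toReal (measure_ne_top μ univ)).comp (tendsto_measure_Iic_atTop μ)

theorem abs_slope_abs_sub_le (x t s : ℝ) : |(s - t)⁻¹ * (|x - s| - |x - t|)| ≤ 1 := by
  rcases eq_or_ne s t with rfl | hst
  · simp
  rw [abs_mul, abs_inv, inv_mul_le_iff₀ (abs_pos.2 (sub_ne_zero.2 hst)), mul_one]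
  calc |(|x - s| - |x - t|)| ≤ |(x - s) - (x - t)| := abs_abs_sub_abs_le_abs_sub _ _
    _ = |s - t| := by rw [sub_sub_sub_cancel_left, abs_sub_comm]

theorem tendsto_slope_abs_sub_nhdsGT (x t : ℝ) :
    Tendsto (fun s => (s - t)⁻¹ * (|x - s| - |x - t|)) (𝓝[>] t)
      (𝓝 (2 * (Iic t).indicator 1 x - 1)) := by
  rcases le_or_gt x t with hxt | htx
  · have hslope : ∀ᶠ s in 𝓝[>] t, (s - t)⁻¹ * (|x - s| - |x - t|) = 1 := by
      filter_upwards [self_mem_nhdsWithin] with s (hs : t < s)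
      rw [abs_of_nonpos (by linarith), abs_of_nonpos (by linarith)]
      field_simp [(sub_pos.2 hs).ne']
      ring
    rw [indicator_of_mem (show x ∈ Iic t from hxt), Pi.one_apply, mul_one,
      show (2 : ℝ) - 1 = 1 by norm_num]
    exact tendsto_const_nhds.congr' (EventuallyEq.symm hslope)
  · have hslope : ∀ᶠ s in 𝓝[>] t, (s - t)⁻¹ * (|x - s| - |x - t|) = -1 := by
      filter_upwards [Ioo_mem_nhdsGT htx] with s hs
      rw [abs_of_pos (by linarith [hs.2]), abs_of_pos (by linarith)]
      field_simp [(sub_pos.2 hs.1).ne']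
      ring
    rw [indicator_of_notMem (show x ∉ Iic t from not_le.2 htx), mul_zero, zero_sub]
    exact tendsto_const_nhds.congr' (EventuallyEq.symm hslope)

theorem hasDerivWithinAt_integral_abs_sub (η : Measure ℝ) [IsFiniteMeasure η]
    (hη : Integrable id η) (t : ℝ) :
    HasDerivWithinAt (fun s => ∫ x, |x - s| ∂η) (2 * η.real (Iic t) - η.real univ) (Ioi t) t := by
  have hint : ∀ s, Integrable (fun x => |x - s|) η := fun s => (hη.sub (integrable_const s)).abs
  have hslope : ∀ s, slope (fun s => ∫ x, |x - s| ∂η) t s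
      = ∫ x, (s - t)⁻¹ * (|x - s| - |x - t|) ∂η := fun s => by
    rw [slope_def_field, integral_const_mul, integral_sub (hint s) (hint t), div_eq_inv_mul]
  have hlimit : ∫ x, (2 * (Iic t).indicator 1 x - 1) ∂η = 2 * η.real (Iic t) - η.real univ := by
    have hind : Integrable ((Iic t).indicator 1) η :=
      (integrable_const (1 : ℝ)).indicator measurableSet_Iic
    rw [integral_sub (hind.const_mul 2) (integrable_const 1), integral_const_mul,
      integral_indicator_one measurableSet_Iic, integral_const, smul_eq_mul, mul_one]
  rw [hasDerivWithinAt_iff_tendsto_slope' self_notMem_Ioi, funext hslope, ← hlimit]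
  refine tendsto_integral_filter_of_dominated_convergence (fun _ => 1) ?_ ?_ (integrable_const 1) ?_
  · exact Eventually.of_forall fun s => ((hint s).sub (hint t)).const_mul _ |>.aestronglyMeasurable
  · exact Eventually.of_forall fun s => Eventually.of_forall fun x => abs_slope_abs_sub_le x t s
  · exact Eventually.of_forall fun x => tendsto_slope_abs_sub_nhdsGT x t

theorem MeasureTheory.Measure.eq_of_integral_abs_sub_eq (η₁ η₂ : Measure ℝ) [IsFiniteMeasure η₁]
    [IsFiniteMeasure η₂] (h₁ : Integrable id η₁) (h₂ : Integrable id η₂)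
    (h : ∀ t : ℝ, ∫ x, |x - t| ∂η₁ = ∫ x, |x - t| ∂η₂) : η₁ = η₂ := by
  have hderiv : ∀ t, 2 * η₁.real (Iic t) - η₁.real univ = 2 * η₂.real (Iic t) - η₂.real univ :=
    fun t => (uniqueDiffWithinAt_Ioi t).eq_deriv _
      (funext h ▸ hasDerivWithinAt_integral_abs_sub η₁ h₁ t)
      (hasDerivWithinAt_integral_abs_sub η₂ h₂ t)
  have hlim : ∀ η : Measure ℝ, [IsFiniteMeasure η] →
      Tendsto (fun t => 2 * η.real (Iic t) - η.real univ) atTop (𝓝 (η.real univ)) := fun η _ => by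
    simpa [two_mul] using ((tendsto_measureReal_Iic_atTop η).const_mul 2).sub_const (η.real univ)
  have hmass : η₁.real univ = η₂.real univ :=
    tendsto_nhds_unique ((hlim η₁).congr hderiv) (hlim η₂)
  refine Measure.ext_of_Iic η₁ η₂ fun t => ?_
  rw [← measureReal_eq_measureReal_iff]
  linarith [hderiv t]

/-- If two compactly supported finite Borel measures on ℝ have the same integrals of
`x ↦ |x - t|` for every `t`, they are equal. -/
theorem stmt_0 (η₁ η₂ : Measure ℝ) [IsFiniteMeasure η₁] [IsFiniteMeasure η₂]
    (hc₁ : ∃ K : Set ℝ, IsCompact K ∧ η₁ Kᶜ = 0)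
    (hc₂ : ∃ K : Set ℝ, IsCompact K ∧ η₂ Kᶜ = 0)
    (h : ∀ t : ℝ, ∫ x, |x - t| ∂η₁ = ∫ x, |x - t| ∂η₂) :
    η₁ = η₂ := by
  obtain ⟨K₁, hK₁, hη₁⟩ := hc₁
  obtain ⟨K₂, hK₂, hη₂⟩ := hc₂
  exact Measure.eq_of_integral_abs_sub_eq η₁ η₂
    (continuous_id.integrable_of_measure_compl_eq_zero hK₁ hη₁)
    (continuous_id.integrable_of_measure_compl_eq_zero hK₂ hη₂) h
end

section
/- Let V be a finite-dimensional complex vector space with a complete filtration 𝓕 with jumping values λ₁ ≤ ⋯ ≤ λ_r. Let H and H' be Hermitian inner products on V with H ≥ H' (as quadratic forms). Let H_s, respectively H'_s, for s ∈ [0, ∞), be the geodesic rays departing from H, respectively H', associated with 𝓕. Then H_s ≥ H'_s for all s ∈ [0, ∞). -/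
/-!
Write `v = ∑ aᵢ eᵢ = ∑ bᵢ e'ᵢ` in the two adapted orthonormal bases, so that
`Hₛ(v, v) = ∑ |aᵢ|² exp(-s λᵢ)` and `H'ₛ(v, v) = ∑ |bᵢ|² exp(-s λᵢ)`. For a threshold `t`, the
part `u` of `v` along the `eᵢ` with `λᵢ < t` differs from `v` by a vector of `𝓕 t`, which is also
spanned by the `e'ᵢ` with `λᵢ ≥ t`; hence `u` has the `e'`-coordinates `bᵢ` for `λᵢ < t`, and
`H' ≤ H` applied to `u` gives `∑_{λᵢ < t} |bᵢ|² ≤ ∑_{λᵢ < t} |aᵢ|²`. Summing by parts over the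
levels of `λ` against the nonnegative decreasing weight `exp(-s λ)` yields `H'ₛ ≤ Hₛ`.
-/

/-- A Hermitian inner product on a complex vector space, as a positive definite
conjugate-symmetric sesquilinear function. -/
def IsInnerForm {V : Type*} [AddCommGroup V] [Module ℂ V] (H : V → V → ℂ) : Prop :=
  (∀ x y z : V, H (x + y) z = H x z + H y z) ∧
  (∀ (c : ℂ) (x y : V), H (c • x) y = (starRingEnd ℂ) c * H x y) ∧
  (∀ x y : V, H y x = (starRingEnd ℂ) (H x y)) ∧
  (∀ x : V, x ≠ 0 → 0 < (H x x).re)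

open Module Submodule

theorem Finset.sum_mul_le_sum_mul_of_sum_filter_lt_le {ι : Type*} (s : Finset ι)
    (lam x y : ι → ℝ) (φ : ℝ → ℝ) (hφ : Antitone φ) (hφ_nonneg : ∀ i ∈ s, 0 ≤ φ (lam i))
    (h : ∀ t, ∑ i ∈ s with lam i < t, y i ≤ ∑ i ∈ s with lam i < t, x i) :
    ∑ i ∈ s, y i * φ (lam i) ≤ ∑ i ∈ s, x i * φ (lam i) := by
  induction s using Finset.strongInduction generalizing φ with
  | H s ih =>
  rcases s.eq_empty_or_nonempty with rfl | hne
  · simp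
  obtain ⟨m, hm, hmax⟩ := s.exists_max_image lam hne
  set c := φ (lam m)
  -- peel off the constant `c`; what remains vanishes on the top level `λ = λ m`
  have hsplit : ∀ z : ι → ℝ, ∑ i ∈ s, z i * φ (lam i) =
      ∑ i ∈ s with lam i < lam m, z i * (φ (lam i) - c) + c * ∑ i ∈ s, z i := by
    intro z
    rw [Finset.sum_filter_of_ne, Finset.mul_sum, ← Finset.sum_add_distrib]
    · exact Finset.sum_congr rfl fun i _ => by ring
    · intro i hi hne
      refine (hmax i hi).lt_of_ne fun heq => hne ?_
      simp [c, heq]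
  rw [hsplit, hsplit]
  have hlower := ih (s.filter (lam · < lam m))
    (Finset.filter_ssubset.mpr ⟨m, hm, lt_irrefl _⟩) (fun l => φ l - c)
    (fun a b hab => sub_le_sub_right (hφ hab) c)
    (fun i hi => sub_nonneg.mpr (hφ (Finset.mem_filter.mp hi).2.le))
    (fun t => by simpa only [Finset.filter_filter, ← lt_min_iff] using h (min (lam m) t))
  have htotal : ∑ i ∈ s, y i ≤ ∑ i ∈ s, x i := by
    simpa [Finset.filter_true_of_mem fun i hi => (hmax i hi).trans_lt (lt_add_one (lam m))]
      using h (lam m + 1)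
  exact add_le_add hlower (mul_le_mul_of_nonneg_left htotal (hφ_nonneg m hm))

theorem Module.Basis.sum_norm_sq_repr_le_of_span_image_eq {𝕜 V ι : Type*} [NormedField 𝕜]
    [AddCommGroup V] [Module 𝕜 V] [Fintype ι] (B B' : Basis ι 𝕜 V)
    (hle : ∀ u, ∑ i, ‖B'.repr u i‖ ^ 2 ≤ ∑ i, ‖B.repr u i‖ ^ 2)
    (p : ι → Prop) [DecidablePred p]
    (hspan : span 𝕜 (B '' {i | ¬ p i}) = span 𝕜 (B' '' {i | ¬ p i})) (v : V) :
    ∑ i with p i, ‖B'.repr v i‖ ^ 2 ≤ ∑ i with p i, ‖B.repr v i‖ ^ 2 := by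
  set u := B.equivFun.symm fun i => if p i then B.repr v i else 0
  have hu : ∀ i, B.repr u i = if p i then B.repr v i else 0 := fun i =>
    congrFun (B.equivFun.apply_symm_apply _) i
  have hvu : v - u ∈ span 𝕜 (B' '' {i | ¬ p i}) := by
    rw [← hspan, B.mem_span_image]
    intro i hi hpi
    simp [hu, hpi] at hi
  have hu' : ∀ i, p i → B'.repr u i = B'.repr v i := fun i hpi => by
    have : B'.repr (v - u) i = 0 :=
      Finsupp.notMem_support_iff.mp fun hi => B'.mem_span_image.mp hvu hi hpi
    rwa [map_sub, Finsupp.sub_apply, sub_eq_zero, eq_comm] at this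
  calc ∑ i with p i, ‖B'.repr v i‖ ^ 2
      = ∑ i with p i, ‖B'.repr u i‖ ^ 2 :=
        Finset.sum_congr rfl fun i hi => by rw [hu' i (Finset.mem_filter.mp hi).2]
    _ ≤ ∑ i, ‖B'.repr u i‖ ^ 2 :=
        Finset.sum_le_sum_of_subset_of_nonneg (Finset.filter_subset _ _) fun _ _ _ => by positivity
    _ ≤ ∑ i, ‖B.repr u i‖ ^ 2 := hle u
    _ = ∑ i with p i, ‖B.repr v i‖ ^ 2 := by
        rw [Finset.sum_filter]
        exact Finset.sum_congr rfl fun i _ => by split_ifs with hpi <;> simp [hu, hpi]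

theorem apply_sum_left {M N P : Type*} [AddCommMonoid M] [AddCommGroup P] {G : M → N → P}
    (hadd : ∀ x y z, G (x + y) z = G x z + G y z) {ι : Type*} (s : Finset ι) (f : ι → M)
    (y : N) : G (∑ i ∈ s, f i) y = ∑ i ∈ s, G (f i) y :=
  map_sum (AddMonoidHom.mk' (G · y) (hadd · · y)) f s

section SesquilinearForm

variable {V : Type*} [AddCommGroup V] [Module ℂ V] {G : V → V → ℂ}

theorem linearIndependent_of_apply_eq_ite (hadd : ∀ x y z : V, G (x + y) z = G x z + G y z)
    (hsmul : ∀ (c : ℂ) (x y : V), G (c • x) y = (starRingEnd ℂ) c * G x y)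
    {ι : Type*} [Fintype ι] [DecidableEq ι] {f : ι → V}
    (hf : ∀ i j, G (f i) (f j) = if i = j then 1 else 0) : LinearIndependent ℂ f := by
  refine Fintype.linearIndependent_iff.mpr fun g hg j => ?_
  have h := apply_sum_left hadd Finset.univ (fun i => g i • f i) (f j)
  simp only [hg, hsmul, hf, mul_ite, mul_one, mul_zero, Finset.sum_ite_eq', Finset.mem_univ,
    if_true] at h
  have hzero : G 0 (f j) = 0 := map_zero (AddMonoidHom.mk' (G · (f j)) (hadd · · (f j)))
  simpa using (hzero.symm.trans h).symm

theorem re_apply_self_eq_sum_norm_sq_repr_mul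
    (hadd : ∀ x y z : V, G (x + y) z = G x z + G y z)
    (hsmul : ∀ (c : ℂ) (x y : V), G (c • x) y = (starRingEnd ℂ) c * G x y)
    (hsymm : ∀ x y : V, G y x = (starRingEnd ℂ) (G x y))
    {ι : Type*} [Fintype ι] [DecidableEq ι] (B : Basis ι ℂ V) (d : ι → ℝ)
    (hB : ∀ i j, G (B i) (B j) = ((if i = j then d i else 0 : ℝ) : ℂ)) (v : V) :
    (G v v).re = ∑ i, ‖B.repr v i‖ ^ 2 * d i := by
  have hright : ∀ i, G v (B i) = (starRingEnd ℂ) (B.repr v i) * d i := fun i => by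
    conv_lhs => rw [← B.sum_repr v]
    rw [apply_sum_left hadd]
    simp [hsmul, hB, apply_ite]
  nth_rewrite 1 [← B.sum_repr v]
  rw [apply_sum_left hadd, Complex.re_sum]
  refine Finset.sum_congr rfl fun i _ => ?_
  rw [hsmul, hsymm v, hright, map_mul, Complex.conj_conj, Complex.conj_ofReal, ← mul_assoc,
    Complex.conj_mul', ← Complex.ofReal_pow, ← Complex.ofReal_mul, Complex.ofReal_re]

theorem re_apply_self_eq_sum_norm_sq_repr
    (hadd : ∀ x y z : V, G (x + y) z = G x z + G y z)
    (hsmul : ∀ (c : ℂ) (x y : V), G (c • x) y = (starRingEnd ℂ) c * G x y)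
    (hsymm : ∀ x y : V, G y x = (starRingEnd ℂ) (G x y))
    {ι : Type*} [Fintype ι] [DecidableEq ι] (B : Basis ι ℂ V)
    (hB : ∀ i j, G (B i) (B j) = if i = j then 1 else 0) (v : V) :
    (G v v).re = ∑ i, ‖B.repr v i‖ ^ 2 := by
  simpa using re_apply_self_eq_sum_norm_sq_repr_mul hadd hsmul hsymm B 1
    (fun i j => by rw [hB]; split_ifs <;> simp) v

end SesquilinearForm

theorem stmt_11_general {V : Type*} [AddCommGroup V] [Module ℂ V]
    {r : ℕ} (lam : Fin r → ℝ)
    (𝓕 : ℝ → Submodule ℂ V) (e e' : Fin r → V)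
    (H H' : V → V → ℂ) (hH : IsInnerForm H) (hH' : IsInnerForm H')
    (he : ∀ i j, H (e i) (e j) = if i = j then 1 else 0)
    (he' : ∀ i j, H' (e' i) (e' j) = if i = j then 1 else 0)
    (hsp : Submodule.span ℂ (Set.range e) = ⊤)
    (hsp' : Submodule.span ℂ (Set.range e') = ⊤)
    (hflag : ∀ t : ℝ, 𝓕 t = Submodule.span ℂ {x | ∃ i, t ≤ lam i ∧ x = e i})
    (hflag' : ∀ t : ℝ, 𝓕 t = Submodule.span ℂ {x | ∃ i, t ≤ lam i ∧ x = e' i})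
    (hord : ∀ v : V, (H' v v).re ≤ (H v v).re)
    (Hs H's : ℝ → V → V → ℂ)
    (hHs : ∀ s : ℝ, 0 ≤ s → IsInnerForm (Hs s))
    (hH's : ∀ s : ℝ, 0 ≤ s → IsInnerForm (H's s))
    (hGram : ∀ (s : ℝ) (i j), Hs s (e i) (e j) =
      if i = j then (Real.exp (-(s * lam i)) : ℝ) else 0)
    (hGram' : ∀ (s : ℝ) (i j), H's s (e' i) (e' j) =
      if i = j then (Real.exp (-(s * lam i)) : ℝ) else 0) :
    ∀ s : ℝ, 0 ≤ s → ∀ v : V, (H's s v v).re ≤ (Hs s v v).re := by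
  intro s hs v
  let B := Basis.mk (linearIndependent_of_apply_eq_ite hH.1 hH.2.1 he) hsp.ge
  let B' := Basis.mk (linearIndependent_of_apply_eq_ite hH'.1 hH'.2.1 he') hsp'.ge
  have hB : ⇑B = e := Basis.coe_mk _ _
  have hB' : ⇑B' = e' := Basis.coe_mk _ _
  have hnorm_le : ∀ u, ∑ i, ‖B'.repr u i‖ ^ 2 ≤ ∑ i, ‖B.repr u i‖ ^ 2 := fun u => by
    rw [← re_apply_self_eq_sum_norm_sq_repr hH.1 hH.2.1 hH.2.2.1 B (hB ▸ he),
      ← re_apply_self_eq_sum_norm_sq_repr hH'.1 hH'.2.1 hH'.2.2.1 B' (hB' ▸ he')]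
    exact hord u
  have himage : ∀ (f : Fin r → V) (t : ℝ),
      f '' {i | ¬ lam i < t} = {x | ∃ i, t ≤ lam i ∧ x = f i} := fun f t => by
    ext; simp [eq_comm]
  have hheads : ∀ t, ∑ i with lam i < t, ‖B'.repr v i‖ ^ 2 ≤ ∑ i with lam i < t, ‖B.repr v i‖ ^ 2 :=
    fun t => B.sum_norm_sq_repr_le_of_span_image_eq B' hnorm_le _
      (by rw [hB, hB', himage, himage, ← hflag, ← hflag']) v
  rw [re_apply_self_eq_sum_norm_sq_repr_mul (hHs s hs).1 (hHs s hs).2.1 (hHs s hs).2.2.1 B _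
      (hB ▸ hGram s) v,
    re_apply_self_eq_sum_norm_sq_repr_mul (hH's s hs).1 (hH's s hs).2.1 (hH's s hs).2.2.1 B' _
      (hB' ▸ hGram' s) v]
  exact Finset.univ.sum_mul_le_sum_mul_of_sum_filter_lt_le lam _ _ (fun l => Real.exp (-(s * l)))
    (fun a b hab => Real.exp_le_exp.mpr (neg_le_neg (mul_le_mul_of_nonneg_left hab hs)))
    (fun _ _ => (Real.exp_pos _).le) hheads

/-- Let `𝓕` be a complete filtration of a finite-dimensional complex vector space `V`
with nondecreasing jumping values `lam`, and let `H ≥ H'` be Hermitian inner products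
with `𝓕`-adapted orthonormal bases `e` resp. `e'`. The geodesic rays `Hs`, `H's`
departing from `H`, `H'` associated with `𝓕` (characterized by the Gram conditions
`Hs s (e i) (e j) = exp(−s·lam i) δ_{ij}`, i.e. `e i · exp(s·lam i / 2)` is
`Hs s`-orthonormal) satisfy `Hs s ≥ H's s` for every `s ≥ 0`. -/
theorem stmt_11 {V : Type*} [AddCommGroup V] [Module ℂ V] [FiniteDimensional ℂ V]
    {r : ℕ} (lam : Fin r → ℝ) (hmono : Monotone lam)
    (𝓕 : ℝ → Submodule ℂ V) (e e' : Fin r → V)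
    (H H' : V → V → ℂ) (hH : IsInnerForm H) (hH' : IsInnerForm H')
    (he : ∀ i j, H (e i) (e j) = if i = j then 1 else 0)
    (he' : ∀ i j, H' (e' i) (e' j) = if i = j then 1 else 0)
    (hsp : Submodule.span ℂ (Set.range e) = ⊤)
    (hsp' : Submodule.span ℂ (Set.range e') = ⊤)
    (hflag : ∀ t : ℝ, 𝓕 t = Submodule.span ℂ {x | ∃ i, t ≤ lam i ∧ x = e i})
    (hflag' : ∀ t : ℝ, 𝓕 t = Submodule.span ℂ {x | ∃ i, t ≤ lam i ∧ x = e' i})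
    (hord : ∀ v : V, (H' v v).re ≤ (H v v).re)
    (Hs H's : ℝ → V → V → ℂ)
    (hHs : ∀ s : ℝ, 0 ≤ s → IsInnerForm (Hs s))
    (hH's : ∀ s : ℝ, 0 ≤ s → IsInnerForm (H's s))
    (hGram : ∀ (s : ℝ) (i j), Hs s (e i) (e j) =
      if i = j then (Real.exp (-(s * lam i)) : ℝ) else 0)
    (hGram' : ∀ (s : ℝ) (i j), H's s (e' i) (e' j) =
      if i = j then (Real.exp (-(s * lam i)) : ℝ) else 0) :
    ∀ s : ℝ, 0 ≤ s → ∀ v : V, (H's s v v).re ≤ (Hs s v v).re :=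
  stmt_11_general lam 𝓕 e e' H H' hH hH' he he' hsp hsp' hflag hflag' hord Hs H's hHs hH's hGram
    hGram'
end

section
/- Let p : V → Q be a surjective linear map of finite-dimensional complex vector spaces, H a Hermitian inner product on V, and [H] the quotient Hermitian inner product on Q. Let 𝓕 be a complete filtration on V with quotient filtration [𝓕] on Q, let H_s^V be the geodesic ray on V departing from H associated with 𝓕, and let H_s^Q be the geodesic ray on Q departing from [H] associated with [𝓕]. Then for all s ∈ [0, ∞), the quotient metric [H_s^V] on Q satisfies [H_s^V] ≥ H_s^Q. -/
/-!
Write `g = ∑ aᵢ eᵢ` and `p g = ∑ bⱼ εⱼ`. For every threshold `t`, removing from `g` its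
component `h` in `𝓕_t` leaves a vector of `H`-norm `∑_{λᵢ < t} |aᵢ|²`; since `p h ∈ [𝓕]_t`,
the quotient norm of `p g - p h` is at least `∑_{νⱼ < t} |bⱼ|²`. Hence the distribution functions
`t ↦ ∑_{νⱼ < t} |bⱼ|²` and `t ↦ ∑_{λᵢ < t} |aᵢ|²` compare pointwise, and integrating them against
the positive density `s e^{-st}` (which represents `e^{-sλ} = ∫_λ^∞ s e^{-st} dt`) gives
`H_s^Q(f) ≤ H_s^V(g)`; at `s = 0` one compares the two distribution functions for large `t`.
-/
open Finset MeasureTheory Submodule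

namespace IsInnerForm

variable {V : Type*} [AddCommGroup V] [Module ℂ V] {G : V → V → ℂ}

lemma add_right (hG : IsInnerForm G) (x y z : V) : G x (y + z) = G x y + G x z := by
  rw [hG.2.2.1 (y + z), hG.1, map_add, ← hG.2.2.1, ← hG.2.2.1]

lemma smul_right (hG : IsInnerForm G) (c : ℂ) (x y : V) : G x (c • y) = c * G x y := by
  rw [hG.2.2.1 (c • y), hG.2.1, map_mul, Complex.conj_conj, ← hG.2.2.1]

def toSesq (hG : IsInnerForm G) : V →ₗ⋆[ℂ] V →ₗ[ℂ] ℂ :=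
  LinearMap.mk₂'ₛₗ _ _ G hG.1 hG.2.1 hG.add_right hG.smul_right

lemma re_nonneg (hG : IsInnerForm G) (x : V) : 0 ≤ (G x x).re := by
  by_cases hx : x = 0
  · have h0 : G 0 0 = 0 := hG.toSesq.map_zero₂ 0
    simp [hx, h0]
  · exact (hG.2.2.2 x hx).le

lemma re_apply_sum_smul (hG : IsInnerForm G) {ι : Type*} [DecidableEq ι] (s : Finset ι)
    (v : ι → V) (w : ι → ℝ) (hv : ∀ i j, G (v i) (v j) = ((if i = j then w i else 0 : ℝ) : ℂ))
    (a : ι → ℂ) :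
    (G (∑ i ∈ s, a i • v i) (∑ i ∈ s, a i • v i)).re = ∑ i ∈ s, Complex.normSq (a i) * w i := by
  have hexp : G (∑ i ∈ s, a i • v i) (∑ i ∈ s, a i • v i)
      = ∑ j ∈ s, ∑ i ∈ s, a j * (starRingEnd ℂ (a i) * G (v i) (v j)) := by
    change hG.toSesq _ _ = _
    simp only [map_sum, LinearMap.sum_apply, map_smulₛₗ, LinearMap.smul_apply, smul_eq_mul,
      RingHom.id_apply, mul_sum]
    rfl
  simp [hexp, hv, Complex.normSq_apply, add_mul, mul_assoc, sum_add_distrib]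

lemma re_apply_sum_smul_of_orthonormal (hG : IsInnerForm G) {ι : Type*} [DecidableEq ι]
    (s : Finset ι) {v : ι → V} (hv : ∀ i j, G (v i) (v j) = if i = j then 1 else 0)
    (a : ι → ℂ) :
    (G (∑ i ∈ s, a i • v i) (∑ i ∈ s, a i • v i)).re = ∑ i ∈ s, Complex.normSq (a i) := by
  simpa using hG.re_apply_sum_smul s v (fun _ => 1) (fun i j => by rw [hv]; split_ifs <;> simp) a

lemma sum_compl_normSq_le_re_sub_of_mem_span (hG : IsInnerForm G) {ι : Type*} [Fintype ι]
    [DecidableEq ι] {v : ι → V} (hv : ∀ i j, G (v i) (v j) = if i = j then 1 else 0)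
    (T : Finset ι) (b : ι → ℂ) {y : V} (hy : y ∈ span ℂ (v '' T)) :
    ∑ j ∈ Tᶜ, Complex.normSq (b j) ≤ (G (∑ j, b j • v j - y) (∑ j, b j • v j - y)).re := by
  obtain ⟨c, rfl⟩ := (mem_span_image_finset_iff_exists_fun' ℂ).mp hy
  set d : ι → ℂ := fun j => if j ∈ T then c j else 0
  have hsub : ∑ j, b j • v j - ∑ j ∈ T, c j • v j = ∑ j, (b j - d j) • v j := by
    simp [d, sub_smul, sum_sub_distrib, ite_smul, sum_ite_mem]
  rw [hsub, hG.re_apply_sum_smul_of_orthonormal _ hv]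
  calc ∑ j ∈ Tᶜ, Complex.normSq (b j) = ∑ j ∈ Tᶜ, Complex.normSq (b j - d j) :=
        sum_congr rfl fun j hj => by simp [d, mem_compl.mp hj]
    _ ≤ ∑ j, Complex.normSq (b j - d j) :=
        sum_le_sum_of_subset_of_nonneg (subset_univ _) fun _ _ _ => Complex.normSq_nonneg _

end IsInnerForm

lemma quotient_re_le {V Q : Type*} [AddCommGroup V] [Module ℂ V] {H : V → V → ℂ}
    (hH : IsInnerForm H) {HQ : Q → Q → ℂ} {p : V → Q}
    (hquot : ∀ f : Q, (HQ f f).re = sInf {c : ℝ | ∃ g : V, p g = f ∧ c = (H g g).re}) (x : V) :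
    (HQ (p x) (p x)).re ≤ (H x x).re := by
  rw [hquot]
  refine csInf_le ⟨0, ?_⟩ ⟨x, rfl, rfl⟩
  rintro _ ⟨g, -, rfl⟩
  exact hH.re_nonneg g

theorem sum_normSq_filter_lt_le {V Q : Type*} [AddCommGroup V] [Module ℂ V] [AddCommGroup Q]
    [Module ℂ Q] (p : V →ₗ[ℂ] Q) {H : V → V → ℂ} (hH : IsInnerForm H) {HQ : Q → Q → ℂ}
    (hHQ : IsInnerForm HQ)
    (hquot : ∀ f : Q, (HQ f f).re = sInf {c : ℝ | ∃ g : V, p g = f ∧ c = (H g g).re})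
    {ι κ : Type*} [Fintype ι] [DecidableEq ι] [Fintype κ] [DecidableEq κ]
    {e : ι → V} {ε : κ → Q} (he : ∀ i j, H (e i) (e j) = if i = j then 1 else 0)
    (hε : ∀ i j, HQ (ε i) (ε j) = if i = j then 1 else 0) {lam : ι → ℝ} {nu : κ → ℝ}
    (hflag : ∀ t, (span ℂ (e '' {i | t ≤ lam i})).map p ≤ span ℂ (ε '' {j | t ≤ nu j}))
    (a : ι → ℂ) (b : κ → ℂ) (hab : p (∑ i, a i • e i) = ∑ j, b j • ε j) (t : ℝ) :
    ∑ j ∈ univ.filter (nu · < t), Complex.normSq (b j)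
      ≤ ∑ i ∈ univ.filter (lam · < t), Complex.normSq (a i) := by
  set S := univ.filter (t ≤ lam ·)
  set T := univ.filter (t ≤ nu ·)
  set h := ∑ i ∈ S, a i • e i
  have hh : p h ∈ span ℂ (ε '' T) := by
    rw [show (T : Set κ) = {j | t ≤ nu j} by simp [T]]
    exact hflag t <| mem_map_of_mem <| sum_mem fun i hi =>
      smul_mem _ (a i) <| subset_span ⟨i, (mem_filter.mp hi).2, rfl⟩
  calc ∑ j ∈ univ.filter (nu · < t), Complex.normSq (b j)
      = ∑ j ∈ Tᶜ, Complex.normSq (b j) := by simp [T, compl_filter]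
    _ ≤ (HQ (∑ j, b j • ε j - p h) (∑ j, b j • ε j - p h)).re :=
        hHQ.sum_compl_normSq_le_re_sub_of_mem_span hε T b hh
    _ = (HQ (p (∑ i, a i • e i - h)) (p (∑ i, a i • e i - h))).re := by rw [map_sub, hab]
    _ ≤ (H (∑ i, a i • e i - h) (∑ i, a i • e i - h)).re := quotient_re_le hH hquot _
    _ = ∑ i ∈ Sᶜ, Complex.normSq (a i) := by
        rw [← sum_compl_add_sum S, add_sub_cancel_right,
          hH.re_apply_sum_smul_of_orthonormal _ he]
    _ = ∑ i ∈ univ.filter (lam · < t), Complex.normSq (a i) := by simp [S, compl_filter]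

section ExpDensity

open Real Set

variable {ι κ : Type*} [Fintype ι] [Fintype κ] {s : ℝ}

lemma integrableOn_mul_exp_neg_mul_Ioi (hs : 0 < s) (a : ℝ) :
    IntegrableOn (fun t => s * exp (-(s * t))) (Ioi a) := by
  simp only [← neg_mul]
  exact (integrableOn_exp_mul_Ioi (neg_neg_of_pos hs) a).const_mul s

lemma integral_mul_exp_neg_mul_Ioi (hs : 0 < s) (a : ℝ) :
    ∫ t in Ioi a, s * exp (-(s * t)) = exp (-(s * a)) := by
  simp only [← neg_mul]
  rw [integral_const_mul, integral_exp_mul_Ioi (neg_neg_of_pos hs)]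
  field_simp

lemma integrable_indicator_Ioi_mul_exp (hs : 0 < s) (c a : ℝ) :
    Integrable ((Ioi a).indicator fun u => c * (s * exp (-(s * u)))) :=
  IntegrableOn.integrable_indicator ((integrableOn_mul_exp_neg_mul_Ioi hs a).const_mul c)
    measurableSet_Ioi

lemma sum_filter_lt_mul_exp_eq_sum_indicator (c lam : ι → ℝ) :
    (fun t => (∑ i ∈ univ.filter (lam · < t), c i) * (s * exp (-(s * t))))
      = fun t => ∑ i, (Ioi (lam i)).indicator (fun u => c i * (s * exp (-(s * u)))) t := by
  ext t
  rw [sum_mul, sum_filter]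
  exact sum_congr rfl fun i _ => by simp [indicator_apply]

lemma integrable_sum_filter_lt_mul_exp (hs : 0 < s) (c lam : ι → ℝ) :
    Integrable fun t => (∑ i ∈ univ.filter (lam · < t), c i) * (s * exp (-(s * t))) := by
  rw [sum_filter_lt_mul_exp_eq_sum_indicator]
  exact integrable_finsetSum _ fun i _ => integrable_indicator_Ioi_mul_exp hs (c i) (lam i)

lemma sum_mul_exp_neg_mul_eq_integral (hs : 0 < s) (c lam : ι → ℝ) :
    ∑ i, c i * exp (-(s * lam i))
      = ∫ t, (∑ i ∈ univ.filter (lam · < t), c i) * (s * exp (-(s * t))) := by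
  rw [sum_filter_lt_mul_exp_eq_sum_indicator,
    integral_finsetSum _ fun i _ => integrable_indicator_Ioi_mul_exp hs (c i) (lam i)]
  refine sum_congr rfl fun i _ => ?_
  rw [integral_indicator measurableSet_Ioi, integral_const_mul,
    integral_mul_exp_neg_mul_Ioi hs]

theorem sum_mul_exp_neg_mul_le_of_forall_sum_filter_lt_le (c lam : ι → ℝ) (d nu : κ → ℝ)
    (h : ∀ t, ∑ j ∈ univ.filter (nu · < t), d j ≤ ∑ i ∈ univ.filter (lam · < t), c i)
    (hs : 0 ≤ s) :
    ∑ j, d j * exp (-(s * nu j)) ≤ ∑ i, c i * exp (-(s * lam i)) := by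
  rcases hs.eq_or_lt with rfl | hs
  · obtain ⟨M, hM⟩ := ((finite_range lam).union (finite_range nu)).bddAbove
    have hlam : ∀ i, lam i < M + 1 := fun i =>
      (hM (Or.inl (mem_range_self i))).trans_lt (lt_add_one M)
    have hnu : ∀ j, nu j < M + 1 := fun j =>
      (hM (Or.inr (mem_range_self j))).trans_lt (lt_add_one M)
    simpa [hlam, hnu] using h (M + 1)
  · rw [sum_mul_exp_neg_mul_eq_integral hs, sum_mul_exp_neg_mul_eq_integral hs]
    exact integral_mono (integrable_sum_filter_lt_mul_exp hs d nu)
      (integrable_sum_filter_lt_mul_exp hs c lam) fun t =>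
        mul_le_mul_of_nonneg_right (h t) (by positivity)

end ExpDensity

lemma setOf_exists_and_eq_eq_image {ι α : Type*} (P : ι → Prop) (f : ι → α) :
    {x | ∃ i, P i ∧ x = f i} = f '' {i | P i} := by
  ext x
  simp [eq_comm]

theorem stmt_13_general {V Q : Type*} [AddCommGroup V] [Module ℂ V]
    [AddCommGroup Q] [Module ℂ Q]
    (p : V →ₗ[ℂ] Q) (hp : Function.Surjective p)
    {r q : ℕ} (lam : Fin r → ℝ) (nu : Fin q → ℝ)
    (e : Fin r → V) (ε : Fin q → Q)
    (H : V → V → ℂ) (hH : IsInnerForm H)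
    (he : ∀ i j, H (e i) (e j) = if i = j then 1 else 0)
    (hsp : Submodule.span ℂ (Set.range e) = ⊤)
    (HQ : Q → Q → ℂ) (hHQ : IsInnerForm HQ)
    (hquot : ∀ f : Q, (HQ f f).re = sInf {c : ℝ | ∃ g : V, p g = f ∧ c = (H g g).re})
    (hε : ∀ i j, HQ (ε i) (ε j) = if i = j then 1 else 0)
    (hspQ : Submodule.span ℂ (Set.range ε) = ⊤)
    (hflagQ : ∀ t : ℝ,
      Submodule.map p (Submodule.span ℂ {x | ∃ i, t ≤ lam i ∧ x = e i}) =
        Submodule.span ℂ {y | ∃ i, t ≤ nu i ∧ y = ε i})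
    (HsV : ℝ → V → V → ℂ) (HsQ : ℝ → Q → Q → ℂ)
    (hHsV : ∀ s : ℝ, 0 ≤ s → IsInnerForm (HsV s))
    (hHsQ : ∀ s : ℝ, 0 ≤ s → IsInnerForm (HsQ s))
    (hGramV : ∀ (s : ℝ) (i j), HsV s (e i) (e j) =
      if i = j then (Real.exp (-(s * lam i)) : ℝ) else 0)
    (hGramQ : ∀ (s : ℝ) (i j), HsQ s (ε i) (ε j) =
      if i = j then (Real.exp (-(s * nu i)) : ℝ) else 0) :
    ∀ s : ℝ, 0 ≤ s → ∀ f : Q,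
      (HsQ s f f).re ≤ sInf {c : ℝ | ∃ g : V, p g = f ∧ c = (HsV s g g).re} := by
  intro s hs f
  obtain ⟨g₀, rfl⟩ := hp f
  refine le_csInf ⟨_, g₀, rfl, rfl⟩ ?_
  rintro _ ⟨g, hg, rfl⟩
  obtain ⟨a, rfl⟩ :=
    (mem_span_range_iff_exists_fun ℂ).mp (hsp ▸ mem_top : g ∈ span ℂ (Set.range e))
  obtain ⟨b, hb⟩ :=
    (mem_span_range_iff_exists_fun ℂ).mp (hspQ ▸ mem_top : p g₀ ∈ span ℂ (Set.range ε))
  have hflag : ∀ t, (span ℂ (e '' {i | t ≤ lam i})).map p ≤ span ℂ (ε '' {j | t ≤ nu j}) :=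
    fun t => by simpa only [setOf_exists_and_eq_eq_image] using (hflagQ t).le
  rw [(hHsV s hs).re_apply_sum_smul univ e _ (hGramV s) a, ← hb,
    (hHsQ s hs).re_apply_sum_smul univ ε _ (hGramQ s) b]
  exact sum_mul_exp_neg_mul_le_of_forall_sum_filter_lt_le _ lam _ nu
    (sum_normSq_filter_lt_le p hH hHQ hquot he hε hflag a b (hg.trans hb.symm)) hs

/-- Let `p : V → Q` be a surjective linear map of finite-dimensional complex vector
spaces, `H` a Hermitian inner product on `V` with quotient Hermitian inner product `HQ`
on `Q` (so `HQ f f = inf {H g g : p g = f}`), and `𝓕` a complete filtration of `V`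
(given by an `H`-orthonormal adapted basis `e` with nondecreasing weights `lam`, so
`𝓕 t = span {e i : lam i ≥ t}`), with quotient filtration `[𝓕] = p(𝓕)` on `Q` (given by
an `HQ`-orthonormal adapted basis `ε` with nondecreasing weights `nu`). Let `HsV` be the
geodesic ray on `V` departing from `H` associated with `𝓕`, and `HsQ` the geodesic ray on
`Q` departing from `HQ` associated with `[𝓕]` (both characterized by Gram conditions).
Then for every `s ≥ 0` the quotient metric of `HsV s` dominates `HsQ s`:
`HsQ s (f, f) ≤ inf {HsV s (g, g) : p g = f}`. -/
theorem stmt_13 {V Q : Type*} [AddCommGroup V] [Module ℂ V] [FiniteDimensional ℂ V]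
    [AddCommGroup Q] [Module ℂ Q] [FiniteDimensional ℂ Q]
    (p : V →ₗ[ℂ] Q) (hp : Function.Surjective p)
    {r q : ℕ} (lam : Fin r → ℝ) (hlam : Monotone lam) (nu : Fin q → ℝ) (hnu : Monotone nu)
    (e : Fin r → V) (ε : Fin q → Q)
    (H : V → V → ℂ) (hH : IsInnerForm H)
    (he : ∀ i j, H (e i) (e j) = if i = j then 1 else 0)
    (hsp : Submodule.span ℂ (Set.range e) = ⊤)
    (HQ : Q → Q → ℂ) (hHQ : IsInnerForm HQ)
    (hquot : ∀ f : Q, (HQ f f).re = sInf {c : ℝ | ∃ g : V, p g = f ∧ c = (H g g).re})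
    (hε : ∀ i j, HQ (ε i) (ε j) = if i = j then 1 else 0)
    (hspQ : Submodule.span ℂ (Set.range ε) = ⊤)
    (hflagQ : ∀ t : ℝ,
      Submodule.map p (Submodule.span ℂ {x | ∃ i, t ≤ lam i ∧ x = e i}) =
        Submodule.span ℂ {y | ∃ i, t ≤ nu i ∧ y = ε i})
    (HsV : ℝ → V → V → ℂ) (HsQ : ℝ → Q → Q → ℂ)
    (hHsV : ∀ s : ℝ, 0 ≤ s → IsInnerForm (HsV s))
    (hHsQ : ∀ s : ℝ, 0 ≤ s → IsInnerForm (HsQ s))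
    (hGramV : ∀ (s : ℝ) (i j), HsV s (e i) (e j) =
      if i = j then (Real.exp (-(s * lam i)) : ℝ) else 0)
    (hGramQ : ∀ (s : ℝ) (i j), HsQ s (ε i) (ε j) =
      if i = j then (Real.exp (-(s * nu i)) : ℝ) else 0) :
    ∀ s : ℝ, 0 ≤ s → ∀ f : Q,
      (HsQ s f f).re ≤ sInf {c : ℝ | ∃ g : V, p g = f ∧ c = (HsV s g g).re} :=
  stmt_13_general p hp lam nu e ε H hH he hsp HQ hHQ hquot hε hspQ hflagQ HsV HsQ hHsV hHsQ hGramV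
    hGramQ
end

section
/- Let V, Q be finite-dimensional complex vector spaces, p : V → Q surjective, and H₀^V, H₁^V Hermitian inner products on V with quotient Hermitian inner products H₀^Q, H₁^Q on Q. For s ∈ [0,1], let H_s^V be the geodesic between H₀^V and H₁^V (defined by H_s^V(u,v) = H₀^V(M^s u, v) where M is the positive H₀^V-self-adjoint operator with H₁^V(u,v) = H₀^V(M u, v)), and define H_s^Q analogously on Q. Then the quotient metric satisfies [H_s^V] ≥ H_s^Q for all s ∈ [0,1]. -/
open Complex Set Matrix ComplexConjugate

noncomputable def weightedNormSq {ι : Type*} [Fintype ι] (w : ι → ℝ) (x : ι → ℂ) : ℝ :=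
  ∑ i, w i * ‖x i‖ ^ 2

namespace IsInnerForm

variable {V : Type*} [AddCommGroup V] [Module ℂ V] {H : V → V → ℂ}

lemma map_zero_left (h : IsInnerForm H) (w : V) : H 0 w = 0 := by
  simpa using h.2.1 0 0 w

lemma re_self_nonneg (h : IsInnerForm H) (x : V) : 0 ≤ (H x x).re := by
  rcases eq_or_ne x 0 with rfl | hx
  · simp [h.map_zero_left]
  · exact (h.2.2.2 x hx).le

variable {ι : Type*} [Fintype ι]

lemma map_sum_smul_left (h : IsInnerForm H) (c : ι → ℂ) (v : ι → V) (w : V) :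
    H (∑ i, c i • v i) w = ∑ i, conj (c i) * H (v i) w := by
  calc H (∑ i, c i • v i) w = ∑ i, H (c i • v i) w :=
        map_sum (AddMonoidHom.mk' (H · w) fun x y ↦ h.1 x y w) _ _
    _ = ∑ i, conj (c i) * H (v i) w := by simp only [h.2.1]

lemma map_sum_smul_right (h : IsInnerForm H) (c : ι → ℂ) (v : ι → V) (w : V) :
    H w (∑ i, c i • v i) = ∑ i, c i * H w (v i) := by
  rw [h.2.2.1, h.map_sum_smul_left, map_sum]
  simp only [map_mul, conj_conj, ← h.2.2.1]

lemma re_sum_smul_self [DecidableEq ι] (h : IsInnerForm H) {v : ι → V} {D : ι → ℝ}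
    (hD : ∀ i j, H (v i) (v j) = ((if i = j then D i else 0 : ℝ) : ℂ)) (c : ι → ℂ) :
    (H (∑ i, c i • v i) (∑ i, c i • v i)).re = weightedNormSq D c := by
  simp only [h.map_sum_smul_left, h.map_sum_smul_right, hD, apply_ite ofReal, ofReal_zero,
    mul_ite, mul_zero, Finset.sum_ite_eq, Finset.mem_univ, if_true, re_sum, weightedNormSq]
  refine Finset.sum_congr rfl fun i _ ↦ ?_
  rw [← mul_assoc, conj_mul', ← ofReal_pow, ← ofReal_mul, ofReal_re, mul_comm]

end IsInnerForm

section Quotient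

variable {V Q : Type*} [AddCommGroup V] [Module ℂ V]

lemma re_self_map_le_of_eq_sInf {p : V → Q} {H : V → V → ℂ} {HQ : Q → Q → ℂ}
    (hH : IsInnerForm H)
    (hquot : ∀ f, (HQ f f).re = sInf {c : ℝ | ∃ g, p g = f ∧ c = (H g g).re}) (g : V) :
    (HQ (p g) (p g)).re ≤ (H g g).re :=
  hquot (p g) ▸ csInf_le ⟨0, by rintro _ ⟨g', -, rfl⟩; exact hH.re_self_nonneg g'⟩ ⟨g, rfl, rfl⟩

variable [AddCommGroup Q] [Module ℂ Q] {ι κ : Type*} [Fintype ι] [Fintype κ] (p : V →ₗ[ℂ] Q)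
  {e : ι → V} {ε : κ → Q} {T : Matrix ι κ ℂ}

lemma map_sum_smul_eq_sum_vecMul_smul (hT : ∀ i, ∑ j, T i j • ε j = p (e i)) (x : ι → ℂ) :
    p (∑ i, x i • e i) = ∑ j, (x ᵥ* T) j • ε j := by
  simp only [map_sum, map_smul, ← hT, Finset.smul_sum, smul_smul, vecMul, dotProduct,
    Finset.sum_smul]
  exact Finset.sum_comm

lemma re_self_map_le_iff [DecidableEq ι] [DecidableEq κ] {H : V → V → ℂ} {HQ : Q → Q → ℂ}
    {D : ι → ℝ} {D' : κ → ℝ} (hsp : Submodule.span ℂ (range e) = ⊤)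
    (hT : ∀ i, ∑ j, T i j • ε j = p (e i)) (hH : IsInnerForm H) (hHQ : IsInnerForm HQ)
    (hD : ∀ i j, H (e i) (e j) = ((if i = j then D i else 0 : ℝ) : ℂ))
    (hD' : ∀ i j, HQ (ε i) (ε j) = ((if i = j then D' i else 0 : ℝ) : ℂ)) :
    (∀ g, (HQ (p g) (p g)).re ≤ (H g g).re) ↔
      ∀ x, weightedNormSq D' (x ᵥ* T) ≤ weightedNormSq D x := by
  have coords (x : ι → ℂ) : (HQ (p (∑ i, x i • e i)) (p (∑ i, x i • e i))).re =
      weightedNormSq D' (x ᵥ* T) := by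
    rw [map_sum_smul_eq_sum_vecMul_smul p hT, hHQ.re_sum_smul_self hD']
  refine ⟨fun h x ↦ ?_, fun h g ↦ ?_⟩
  · simpa only [coords, hH.re_sum_smul_self hD] using h (∑ i, x i • e i)
  · obtain ⟨x, rfl⟩ := (Submodule.mem_span_range_iff_exists_fun ℂ).1
      (hsp ▸ Submodule.mem_top : g ∈ Submodule.span ℂ (range e))
    rw [coords, hH.re_sum_smul_self hD]
    exact h x

end Quotient

section ThreeLines

lemma norm_cexp_mul_ofReal_le {z : ℂ} (hz : z.re ∈ Icc 0 1) (c : ℝ) :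
    ‖cexp (z * c)‖ ≤ Real.exp |c| := by
  rw [norm_exp, re_mul_ofReal]
  gcongr
  calc z.re * c ≤ z.re * |c| := mul_le_mul_of_nonneg_left (le_abs_self c) hz.1
    _ ≤ |c| := mul_le_of_le_one_left (abs_nonneg c) hz.2

variable {K : Type*} [Fintype K] (a : K → ℂ) (c : K → ℝ)

lemma norm_sum_mul_cexp_le_of_boundary {M : ℝ}
    (h₀ : ∀ z : ℂ, z.re = 0 → ‖∑ k, a k * cexp (z * c k)‖ ≤ M)
    (h₁ : ∀ z : ℂ, z.re = 1 → ‖∑ k, a k * cexp (z * c k)‖ ≤ M) {s : ℝ} (hs : s ∈ Icc 0 1) :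
    ‖∑ k, a k * cexp (s * c k)‖ ≤ M := by
  let F : ℂ → ℂ := fun z ↦ ∑ k, a k * cexp (z * c k)
  have hF : Differentiable ℂ F := by fun_prop
  have hbdd : BddAbove ((norm ∘ F) '' HadamardThreeLines.verticalClosedStrip 0 1) := by
    refine ⟨∑ k, ‖a k‖ * Real.exp |c k|, ?_⟩
    rintro _ ⟨z, hz, rfl⟩
    refine (norm_sum_le _ _).trans (Finset.sum_le_sum fun k _ ↦ ?_)
    rw [norm_mul]
    gcongr
    exact norm_cexp_mul_ofReal_le hz _
  have hM : 0 ≤ M := (norm_nonneg _).trans (h₀ 0 rfl)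
  have := HadamardThreeLines.norm_le_interp_of_mem_verticalClosedStrip₀₁' F (z := s)
    (by simpa [HadamardThreeLines.verticalClosedStrip] using hs) hF.diffContOnCl hbdd
    h₀ h₁
  rwa [ofReal_re, ← Real.rpow_add' hM (by norm_num), sub_add_cancel, Real.rpow_one] at this

end ThreeLines

lemma le_of_le_sqrt_mul_sqrt {a b : ℝ} (hb : 0 ≤ b) (h : a ≤ √a * √b) : a ≤ b := by
  rcases le_or_gt a 0 with ha | ha
  · linarith
  · have := Real.sq_sqrt ha.le
    have := Real.sq_sqrt hb
    nlinarith [Real.sqrt_nonneg a, Real.sqrt_nonneg b, sq_nonneg (√a - √b)]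

section SteinWeiss

variable {ι κ : Type*} [Fintype ι] [Fintype κ] (T : Matrix ι κ ℂ)

lemma norm_cexp_mul_half_log_sq {x : ℝ} (hx : 0 < x) (z : ℂ) :
    ‖cexp (z * ↑(Real.log x / 2))‖ ^ 2 = x ^ z.re := by
  rw [norm_exp, re_mul_ofReal, Real.rpow_def_of_pos hx, sq, ← Real.exp_add]
  ring_nf

lemma sum_mul_cexp_eq_sum_vecMul (a : κ → ℝ) (b : ι → ℝ) (u : ι → ℂ) (y : κ → ℂ) (z : ℂ) :
    ∑ k : ι × κ, conj (y k.2) * T k.1 k.2 * u k.1 * cexp (z * ↑(a k.2 - b k.1)) =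
      ∑ j, conj (y j) * cexp (z * a j) * ((fun i ↦ cexp (-z * b i) * u i) ᵥ* T) j := by
  rw [Fintype.sum_prod_type_right]
  refine Finset.sum_congr rfl fun j _ ↦ ?_
  simp only [vecMul, dotProduct, Finset.mul_sum]
  refine Finset.sum_congr rfl fun i _ ↦ ?_
  rw [ofReal_sub, mul_sub, sub_eq_add_neg, ← neg_mul, exp_add]
  ring

variable {mu : ι → ℝ} {nu : κ → ℝ}

lemma norm_sum_vecMul_le_of_re_eq (hmu : ∀ i, 0 < mu i) (hnu : ∀ j, 0 < nu j) {t : ℝ}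
    (ht : ∀ x, weightedNormSq (nu ^ t) (x ᵥ* T) ≤ weightedNormSq (mu ^ t) x)
    (u : ι → ℂ) (y : κ → ℂ) {z : ℂ} (hz : z.re = t) :
    ‖∑ j, conj (y j) * cexp (z * ↑(Real.log (nu j) / 2)) *
        ((fun i ↦ cexp (-z * ↑(Real.log (mu i) / 2)) * u i) ᵥ* T) j‖ ≤
      √(∑ j, ‖y j‖ ^ 2) * √(∑ i, ‖u i‖ ^ 2) := by
  set x := fun i ↦ cexp (-z * ↑(Real.log (mu i) / 2)) * u i
  have hx : weightedNormSq (mu ^ t) x = ∑ i, ‖u i‖ ^ 2 := by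
    refine Finset.sum_congr rfl fun i _ ↦ ?_
    rw [norm_mul, mul_pow, norm_cexp_mul_half_log_sq (hmu i), neg_re, hz, Pi.pow_apply,
      ← mul_assoc, ← Real.rpow_add (hmu i), add_neg_cancel, Real.rpow_zero, one_mul]
  calc _ ≤ ∑ j, ‖y j‖ * (‖cexp (z * ↑(Real.log (nu j) / 2))‖ * ‖(x ᵥ* T) j‖) := by
        refine (norm_sum_le _ _).trans_eq (Finset.sum_congr rfl fun j _ ↦ ?_)
        rw [norm_mul, norm_mul, RCLike.norm_conj, mul_assoc]
    _ ≤ √(∑ j, ‖y j‖ ^ 2) *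
          √(∑ j, (‖cexp (z * ↑(Real.log (nu j) / 2))‖ * ‖(x ᵥ* T) j‖) ^ 2) :=
        Real.sum_mul_le_sqrt_mul_sqrt _ _ _
    _ = √(∑ j, ‖y j‖ ^ 2) * √(weightedNormSq (nu ^ t) (x ᵥ* T)) := by
        simp only [mul_pow, norm_cexp_mul_half_log_sq (hnu _), hz, weightedNormSq, Pi.pow_apply]
    _ ≤ _ := by
        rw [← hx]
        gcongr
        exact ht x

theorem weightedNormSq_vecMul_rpow_le (hmu : ∀ i, 0 < mu i) (hnu : ∀ j, 0 < nu j)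
    (hends : ∀ t ∈ ({0, 1} : Set ℝ), ∀ x, weightedNormSq (nu ^ t) (x ᵥ* T) ≤
      weightedNormSq (mu ^ t) x)
    {s : ℝ} (hs : s ∈ Icc 0 1) (x : ι → ℂ) :
    weightedNormSq (nu ^ s) (x ᵥ* T) ≤ weightedNormSq (mu ^ s) x := by
  set a : κ → ℝ := fun j ↦ Real.log (nu j) / 2
  set b : ι → ℝ := fun i ↦ Real.log (mu i) / 2
  set u : ι → ℂ := fun i ↦ cexp (s * b i) * x i
  set y : κ → ℂ := fun j ↦ cexp (s * a j) * (x ᵥ* T) j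
  have hu : ∑ i, ‖u i‖ ^ 2 = weightedNormSq (mu ^ s) x := by
    simp only [u, b, norm_mul, mul_pow, norm_cexp_mul_half_log_sq (hmu _), ofReal_re,
      weightedNormSq, Pi.pow_apply]
  have hy : ∑ j, ‖y j‖ ^ 2 = weightedNormSq (nu ^ s) (x ᵥ* T) := by
    simp only [y, a, norm_mul, mul_pow, norm_cexp_mul_half_log_sq (hnu _), ofReal_re,
      weightedNormSq, Pi.pow_apply]
  have hux : (fun i ↦ cexp (-s * b i) * u i) = x := by
    funext i
    rw [← mul_assoc, ← exp_add, neg_mul, neg_add_cancel, exp_zero, one_mul]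
  have hFs : ∑ j, conj (y j) * cexp (s * a j) * ((fun i ↦ cexp (-s * b i) * u i) ᵥ* T) j =
      ((∑ j, ‖y j‖ ^ 2 : ℝ) : ℂ) := by
    push_cast
    simp only [hux, mul_assoc, ← conj_mul']
    rfl
  have hboundary (t : ℝ) (ht : t ∈ ({0, 1} : Set ℝ)) (z : ℂ) (hz : z.re = t) :
      ‖∑ k : ι × κ, conj (y k.2) * T k.1 k.2 * u k.1 * cexp (z * ↑(a k.2 - b k.1))‖ ≤
        √(∑ j, ‖y j‖ ^ 2) * √(∑ i, ‖u i‖ ^ 2) :=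
    sum_mul_cexp_eq_sum_vecMul T a b u y z ▸
      norm_sum_vecMul_le_of_re_eq T hmu hnu (hends t ht) u y hz
  have key := norm_sum_mul_cexp_le_of_boundary _ _ (hboundary 0 (by simp))
    (hboundary 1 (by simp)) hs
  rw [sum_mul_cexp_eq_sum_vecMul, hFs, norm_real, Real.norm_of_nonneg (by positivity), hy,
    hu] at key
  exact le_of_le_sqrt_mul_sqrt (hu ▸ by positivity) key

end SteinWeiss

theorem stmt_14_general {V Q : Type*} [AddCommGroup V] [Module ℂ V]
    [AddCommGroup Q] [Module ℂ Q]
    (p : V →ₗ[ℂ] Q) (hp : Function.Surjective p)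
    {r q : ℕ} (mu : Fin r → ℝ) (hmu : ∀ i, 0 < mu i) (nu : Fin q → ℝ) (hnu : ∀ i, 0 < nu i)
    (e : Fin r → V) (ε : Fin q → Q)
    (H₀ H₁ : V → V → ℂ) (hH₀ : IsInnerForm H₀) (hH₁ : IsInnerForm H₁)
    (he₀ : ∀ i j, H₀ (e i) (e j) = if i = j then 1 else 0)
    (he₁ : ∀ i j, H₁ (e i) (e j) = if i = j then (mu i : ℝ) else 0)
    (hsp : Submodule.span ℂ (Set.range e) = ⊤)
    (H₀Q H₁Q : Q → Q → ℂ) (hH₀Q : IsInnerForm H₀Q) (hH₁Q : IsInnerForm H₁Q)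
    (hquot₀ : ∀ f : Q, (H₀Q f f).re = sInf {c : ℝ | ∃ g : V, p g = f ∧ c = (H₀ g g).re})
    (hquot₁ : ∀ f : Q, (H₁Q f f).re = sInf {c : ℝ | ∃ g : V, p g = f ∧ c = (H₁ g g).re})
    (hε₀ : ∀ i j, H₀Q (ε i) (ε j) = if i = j then 1 else 0)
    (hε₁ : ∀ i j, H₁Q (ε i) (ε j) = if i = j then (nu i : ℝ) else 0)
    (hspQ : Submodule.span ℂ (Set.range ε) = ⊤)
    (Hs : ℝ → V → V → ℂ) (HsQ : ℝ → Q → Q → ℂ)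
    (hHs : ∀ s : ℝ, 0 ≤ s → s ≤ 1 → IsInnerForm (Hs s))
    (hHsQ : ∀ s : ℝ, 0 ≤ s → s ≤ 1 → IsInnerForm (HsQ s))
    (hGram : ∀ (s : ℝ) (i j), Hs s (e i) (e j) =
      if i = j then (Real.rpow (mu i) s : ℝ) else 0)
    (hGramQ : ∀ (s : ℝ) (i j), HsQ s (ε i) (ε j) =
      if i = j then (Real.rpow (nu i) s : ℝ) else 0) :
    ∀ s : ℝ, 0 ≤ s → s ≤ 1 → ∀ f : Q,
      (HsQ s f f).re ≤ sInf {c : ℝ | ∃ g : V, p g = f ∧ c = (Hs s g g).re} := by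
  choose T hT using fun i ↦ (Submodule.mem_span_range_iff_exists_fun ℂ).1
    (hspQ ▸ Submodule.mem_top : p (e i) ∈ Submodule.span ℂ (range ε))
  have hends : ∀ t ∈ ({0, 1} : Set ℝ), ∀ x, weightedNormSq (nu ^ t) (x ᵥ* T) ≤
      weightedNormSq (mu ^ t) x := by
    rintro t (rfl | rfl)
    · exact (re_self_map_le_iff p hsp hT hH₀ hH₀Q (by simp [he₀, apply_ite ofReal])
        (by simp [hε₀, apply_ite ofReal])).1
        (re_self_map_le_of_eq_sInf hH₀ hquot₀)
    · exact (re_self_map_le_iff p hsp hT hH₁ hH₁Q (by simp [he₁]) (by simp [hε₁])).1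
        (re_self_map_le_of_eq_sInf hH₁ hquot₁)
  intro s hs₀ hs₁ f
  obtain ⟨g₀, rfl⟩ := hp f
  refine le_csInf ⟨_, g₀, rfl, rfl⟩ ?_
  rintro _ ⟨g, hg, rfl⟩
  rw [← hg]
  exact (re_self_map_le_iff p hsp hT (hHs s hs₀ hs₁) (hHsQ s hs₀ hs₁) (hGram s) (hGramQ s)).2
    (weightedNormSq_vecMul_rpow_le T hmu hnu hends ⟨hs₀, hs₁⟩) g

/-- Let `p : V → Q` be surjective, `H₀, H₁` Hermitian inner products on `V` with quotient
inner products `H₀Q, H₁Q` on `Q`. The geodesic `Hs s (u,v) = H₀ (Mˢ u, v)` (where `M` is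
the positive `H₀`-self-adjoint operator with `H₁ = H₀(M·,·)`) is encoded by an
`H₀`-orthonormal basis `e` diagonalizing `M` with positive eigenvalues `mu`, via the Gram
conditions `Hs s (e i) (e j) = (mu i)^s δᵢⱼ`; similarly on `Q` with basis `ε` and
eigenvalues `nu`. Then for all `s ∈ [0,1]` the quotient of `Hs s` dominates the geodesic
`HsQ s` between the quotient metrics: `HsQ s (f,f) ≤ inf {Hs s (g,g) : p g = f}`. -/
theorem stmt_14 {V Q : Type*} [AddCommGroup V] [Module ℂ V] [FiniteDimensional ℂ V]
    [AddCommGroup Q] [Module ℂ Q] [FiniteDimensional ℂ Q]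
    (p : V →ₗ[ℂ] Q) (hp : Function.Surjective p)
    {r q : ℕ} (mu : Fin r → ℝ) (hmu : ∀ i, 0 < mu i) (nu : Fin q → ℝ) (hnu : ∀ i, 0 < nu i)
    (e : Fin r → V) (ε : Fin q → Q)
    (H₀ H₁ : V → V → ℂ) (hH₀ : IsInnerForm H₀) (hH₁ : IsInnerForm H₁)
    (he₀ : ∀ i j, H₀ (e i) (e j) = if i = j then 1 else 0)
    (he₁ : ∀ i j, H₁ (e i) (e j) = if i = j then (mu i : ℝ) else 0)
    (hsp : Submodule.span ℂ (Set.range e) = ⊤)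
    (H₀Q H₁Q : Q → Q → ℂ) (hH₀Q : IsInnerForm H₀Q) (hH₁Q : IsInnerForm H₁Q)
    (hquot₀ : ∀ f : Q, (H₀Q f f).re = sInf {c : ℝ | ∃ g : V, p g = f ∧ c = (H₀ g g).re})
    (hquot₁ : ∀ f : Q, (H₁Q f f).re = sInf {c : ℝ | ∃ g : V, p g = f ∧ c = (H₁ g g).re})
    (hε₀ : ∀ i j, H₀Q (ε i) (ε j) = if i = j then 1 else 0)
    (hε₁ : ∀ i j, H₁Q (ε i) (ε j) = if i = j then (nu i : ℝ) else 0)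
    (hspQ : Submodule.span ℂ (Set.range ε) = ⊤)
    (Hs : ℝ → V → V → ℂ) (HsQ : ℝ → Q → Q → ℂ)
    (hHs : ∀ s : ℝ, 0 ≤ s → s ≤ 1 → IsInnerForm (Hs s))
    (hHsQ : ∀ s : ℝ, 0 ≤ s → s ≤ 1 → IsInnerForm (HsQ s))
    (hGram : ∀ (s : ℝ) (i j), Hs s (e i) (e j) =
      if i = j then (Real.rpow (mu i) s : ℝ) else 0)
    (hGramQ : ∀ (s : ℝ) (i j), HsQ s (ε i) (ε j) =
      if i = j then (Real.rpow (nu i) s : ℝ) else 0) :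
    ∀ s : ℝ, 0 ≤ s → s ≤ 1 → ∀ f : Q,
      (HsQ s f f).re ≤ sInf {c : ℝ | ∃ g : V, p g = f ∧ c = (Hs s g g).re} :=
  stmt_14_general p hp mu hmu nu hnu e ε H₀ H₁ hH₀ hH₁ he₀ he₁ hsp H₀Q H₁Q hH₀Q hH₁Q hquot₀ hquot₁
    hε₀ hε₁ hspQ Hs HsQ hHs hHsQ hGram hGramQ
end
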